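/- arXiv:2504.14158 — 2 statements merged into one kernel-verified Lean document; each statement's English description precedes it below -/
import Mathlib

section
/- Define, for CPTN super-operators E, F on L(H_V): E ≤_P^e F iff for all effects M, N (on any extension system), M ⊑ I − E†(I − N) implies M ⊑ I − F†(I − N). Then E ≤_P^e F if and only if E − F is completely positive. -/
open Matrix
open scoped ComplexOrder

noncomputable section

/-- Löwner order: `A ⊑ B` iff `B - A` is positive semidefinite. -/
def Loewner {d : Type*} [Fintype d] (A B : Matrix d d ℂ) : Prop :=
  (B - A).PosSemidef

/-- An effect: a positive semidefinite operator bounded above by the identity. -/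
def IsEffect {d : Type*} [Fintype d] [DecidableEq d] (M : Matrix d d ℂ) : Prop :=
  M.PosSemidef ∧ (1 - M).PosSemidef

/-- A (partial) density operator: positive semidefinite with trace at most 1. -/
def IsDensity {d : Type*} [Fintype d] (ρ : Matrix d d ℂ) : Prop :=
  ρ.PosSemidef ∧ ρ.trace.re ≤ 1

/-- An orthogonal projector: Hermitian idempotent. -/
def IsProj {d : Type*} [Fintype d] (P : Matrix d d ℂ) : Prop :=
  P.IsHermitian ∧ P * P = P

-- Demonic expectation: `inf_{M ∈ Θ} tr(M ρ)`, with the convention that the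
-- infimum over the empty set is `tr ρ`.
open Classical in
def demExp {d : Type*} [Fintype d] (Θ : Set (Matrix d d ℂ)) (ρ : Matrix d d ℂ) : ℝ :=
  if Θ = ∅ then ρ.trace.re else sInf ((fun M => (M * ρ).trace.re) '' Θ)

/-- Angelic expectation: `sup_{M ∈ Θ} tr(M ρ)`; note `sSup ∅ = 0` in `ℝ`,
matching the convention that the supremum over the empty set is `0`. -/
def angExp {d : Type*} [Fintype d] (Θ : Set (Matrix d d ℂ)) (ρ : Matrix d d ℂ) : ℝ :=
  sSup ((fun M => (M * ρ).trace.re) '' Θ)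

/-- The extension `I_{Fin m} ⊗ Φ` of a super-operator `Φ`, acting blockwise. -/
def tensorMap {n : ℕ} (Φ : Matrix (Fin n) (Fin n) ℂ → Matrix (Fin n) (Fin n) ℂ) (m : ℕ)
    (A : Matrix (Fin m × Fin n) (Fin m × Fin n) ℂ) :
    Matrix (Fin m × Fin n) (Fin m × Fin n) ℂ :=
  fun p q => Φ (Matrix.of fun a b => A (p.1, a) (q.1, b)) p.2 q.2

/-- Complete positivity: every extension `I_K ⊗ Φ` maps positive semidefinite
matrices to positive semidefinite matrices. -/
def IsCP {n : ℕ} (Φ : Matrix (Fin n) (Fin n) ℂ → Matrix (Fin n) (Fin n) ℂ) : Prop :=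
  ∀ (m : ℕ) (A : Matrix (Fin m × Fin n) (Fin m × Fin n) ℂ),
    A.PosSemidef → (tensorMap Φ m A).PosSemidef

/-- Trace-nonincreasing on positive operators. -/
def IsTNI {n : ℕ} (Φ : Matrix (Fin n) (Fin n) ℂ → Matrix (Fin n) (Fin n) ℂ) : Prop :=
  ∀ A : Matrix (Fin n) (Fin n) ℂ, A.PosSemidef → (Φ A).trace.re ≤ A.trace.re

/-- Trace-preserving on positive operators. -/
def IsTP {n : ℕ} (Φ : Matrix (Fin n) (Fin n) ℂ → Matrix (Fin n) (Fin n) ℂ) : Prop :=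
  ∀ A : Matrix (Fin n) (Fin n) ℂ, A.PosSemidef → (Φ A).trace = A.trace

/-- CPTN super-operator: linear, completely positive, and trace-nonincreasing. -/
def IsCPTN {n : ℕ} (Φ : Matrix (Fin n) (Fin n) ℂ → Matrix (Fin n) (Fin n) ℂ) : Prop :=
  IsLinearMap ℂ Φ ∧ IsCP Φ ∧ IsTNI Φ

/-- The Choi matrix `J(Φ) = (Φ ⊗ I)(Ω)` of `Φ`, where `Ω` is the maximally
entangled state on `H ⊗ H`. -/
def choi {n : ℕ} (Φ : Matrix (Fin n) (Fin n) ℂ → Matrix (Fin n) (Fin n) ℂ) :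
    Matrix (Fin n × Fin n) (Fin n × Fin n) ℂ :=
  fun p q => (1 / (n : ℂ)) * Φ (Matrix.single p.2 q.2 1) p.1 q.1


/-! Write `Ψ` for a dual of `Φ`, i.e. `tr (Φ A * B) = tr (A * Ψ B)`. Then `I ⊗ Ψ` is dual to
`I ⊗ Φ`, so when `E - F` is completely positive, `I ⊗ (E' - F')` maps the positive matrix `I - N`
to a positive one, i.e. `I - E'(I - N) ⊑ I - F'(I - N)`, which is the refinement.
Conversely, for an effect `P`, apply the refinement to `N = I - P` and to its own weakest
precondition `M = I - E'(P)`, an effect because `E` is CPTN: this gives `F'(P) ⊑ E'(P)`, hence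
`tr ((E - F)(A) P) = tr (A (E'(P) - F'(P))) ≥ 0` for positive `A`. Testing against effects suffices,
since every rank-one positive matrix is a positive multiple of a projector. -/

section ComplexMatrix

variable {d : Type*} [Fintype d]

open scoped InnerProductSpace in
theorem Matrix.posSemidef_of_forall_dotProduct_mulVec_nonneg [DecidableEq d] {X : Matrix d d ℂ}
    (h : ∀ x : d → ℂ, 0 ≤ star x ⬝ᵥ X *ᵥ x) : X.PosSemidef := by
  rw [← isPositive_toEuclideanLin_iff, LinearMap.isPositive_iff_complex]
  intro x
  have hx := h x.ofLp
  have hinner : ⟪X.toEuclideanLin x, x⟫_ℂ = star x.ofLp ⬝ᵥ X *ᵥ x.ofLp := by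
    rw [EuclideanSpace.inner_eq_star_dotProduct, ← (IsSelfAdjoint.of_nonneg hx).star_eq,
      star_dotProduct, star_star]
    exact dotProduct_comm _ _
  rw [hinner]
  exact ⟨Complex.ext rfl (Complex.nonneg_iff.mp hx).2, (Complex.nonneg_iff.mp hx).1⟩

theorem Matrix.dotProduct_mulVec_eq_trace_mul_vecMulVec (X : Matrix d d ℂ) (x : d → ℂ) :
    star x ⬝ᵥ X *ᵥ x = (X * vecMulVec x (star x)).trace := by
  rw [mul_vecMulVec, trace_vecMulVec, dotProduct_comm]

theorem Matrix.PosSemidef.trace_mul_nonneg [DecidableEq d] {A B : Matrix d d ℂ}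
    (hA : A.PosSemidef) (hB : B.PosSemidef) : 0 ≤ (A * B).trace := by
  open scoped MatrixOrder in
  obtain ⟨C, rfl⟩ := CStarAlgebra.nonneg_iff_eq_star_mul_self.mp hA.nonneg
  rw [Matrix.mul_assoc, trace_mul_comm]
  exact (hB.mul_mul_conjTranspose_same C).trace_nonneg

theorem IsProj.isEffect [DecidableEq d] {P : Matrix d d ℂ} (hP : IsProj P) : IsEffect P := by
  obtain ⟨hherm, hidem⟩ := hP
  constructor
  · simpa [hherm.eq, hidem] using posSemidef_conjTranspose_mul_self P
  · have h := posSemidef_conjTranspose_mul_self (1 - P)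
    rwa [conjTranspose_sub, conjTranspose_one, hherm.eq, sub_mul, mul_sub, mul_sub, hidem,
      mul_one, one_mul, mul_one, sub_self, sub_zero] at h

theorem isProj_inv_smul_vecMulVec {x : d → ℂ} (hx : x ≠ 0) :
    IsProj ((star x ⬝ᵥ x)⁻¹ • vecMulVec x (star x)) := by
  have hpos : 0 < star x ⬝ᵥ x := dotProduct_star_self_pos_iff.mpr hx
  have hself : star (star x ⬝ᵥ x)⁻¹ = (star x ⬝ᵥ x)⁻¹ := by
    rw [star_inv₀, (IsSelfAdjoint.of_nonneg hpos.le).star_eq]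
  constructor
  · rw [IsHermitian, conjTranspose_smul, conjTranspose_vecMulVec, star_star, hself]
  · rw [smul_mul_smul_comm, vecMulVec_mul_vecMulVec, vecMulVec_smul, smul_smul,
      mul_assoc, inv_mul_cancel₀ hpos.ne', mul_one]

theorem Matrix.posSemidef_of_forall_isEffect_trace_mul_nonneg [DecidableEq d] {X : Matrix d d ℂ}
    (h : ∀ P, IsEffect P → 0 ≤ (X * P).trace) : X.PosSemidef := by
  refine posSemidef_of_forall_dotProduct_mulVec_nonneg fun x => ?_
  rcases eq_or_ne x 0 with rfl | hx
  · simp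
  have hpos : 0 < star x ⬝ᵥ x := dotProduct_star_self_pos_iff.mpr hx
  have hscale :
      vecMulVec x (star x) = (star x ⬝ᵥ x) • ((star x ⬝ᵥ x)⁻¹ • vecMulVec x (star x)) := by
    rw [smul_smul, mul_inv_cancel₀ hpos.ne', one_smul]
  rw [dotProduct_mulVec_eq_trace_mul_vecMulVec, hscale, Matrix.mul_smul, trace_smul, smul_eq_mul]
  exact mul_nonneg hpos.le (h _ (isProj_inv_smul_vecMulVec hx).isEffect)

end ComplexMatrix

section TensorMap

variable {n m : ℕ} {Φ Ψ : Matrix (Fin n) (Fin n) ℂ → Matrix (Fin n) (Fin n) ℂ}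

theorem tensorMap_sub (Φ Ψ : Matrix (Fin n) (Fin n) ℂ → Matrix (Fin n) (Fin n) ℂ) (m : ℕ)
    (A : Matrix (Fin m × Fin n) (Fin m × Fin n) ℂ) :
    tensorMap (Φ - Ψ) m A = tensorMap Φ m A - tensorMap Ψ m A :=
  rfl

theorem trace_tensorMap_mul_of_adjoint
    (hadj : ∀ A B : Matrix (Fin n) (Fin n) ℂ, (Φ A * B).trace = (A * Ψ B).trace)
    (A B : Matrix (Fin m × Fin n) (Fin m × Fin n) ℂ) :
    (tensorMap Φ m A * B).trace = (A * tensorMap Ψ m B).trace := by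
  calc (tensorMap Φ m A * B).trace
      = ∑ i, ∑ j,
          (Φ (of fun a b => A (i, a) (j, b)) * of fun a b => B (j, a) (i, b)).trace := by
        simp only [trace, diag, mul_apply, tensorMap, Fintype.sum_prod_type, of_apply]
        exact Finset.sum_congr rfl fun i _ => Finset.sum_comm
    _ = ∑ i, ∑ j,
          (of (fun a b => A (i, a) (j, b)) * Ψ (of fun a b => B (j, a) (i, b))).trace := by
        simp only [hadj]
    _ = (A * tensorMap Ψ m B).trace := by
        simp only [trace, diag, mul_apply, tensorMap, Fintype.sum_prod_type, of_apply]
        exact Finset.sum_congr rfl fun i _ => Finset.sum_comm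

theorem IsCP.posSemidef_tensorMap_of_adjoint (hcp : IsCP Φ)
    (hadj : ∀ A B : Matrix (Fin n) (Fin n) ℂ, (Φ A * B).trace = (A * Ψ B).trace)
    {B : Matrix (Fin m × Fin n) (Fin m × Fin n) ℂ} (hB : B.PosSemidef) :
    (tensorMap Ψ m B).PosSemidef := by
  refine posSemidef_of_forall_dotProduct_mulVec_nonneg fun x => ?_
  rw [dotProduct_mulVec_eq_trace_mul_vecMulVec, trace_mul_comm,
    ← trace_tensorMap_mul_of_adjoint hadj]
  exact (hcp m _ (posSemidef_vecMulVec_self_star x)).trace_mul_nonneg hB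

theorem IsTNI.trace_tensorMap_le (htni : IsTNI Φ) (hcp : IsCP Φ)
    {A : Matrix (Fin m × Fin n) (Fin m × Fin n) ℂ} (hA : A.PosSemidef) :
    (tensorMap Φ m A).trace ≤ A.trace := by
  have hre : (tensorMap Φ m A).trace.re ≤ A.trace.re := by
    simp only [trace, diag, Fintype.sum_prod_type, Complex.re_sum]
    refine Finset.sum_le_sum fun i _ => ?_
    have h := htni _ (hA.submatrix fun a => (i, a))
    simp only [trace, diag, Complex.re_sum] at h
    exact h
  rw [Complex.le_def]
  exact ⟨hre, by rw [← (Complex.nonneg_iff.mp (hcp m A hA).trace_nonneg).2,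
    ← (Complex.nonneg_iff.mp hA.trace_nonneg).2]⟩

theorem isEffect_one_sub_tensorMap_of_adjoint (hcp : IsCP Φ) (htni : IsTNI Φ)
    (hadj : ∀ A B : Matrix (Fin n) (Fin n) ℂ, (Φ A * B).trace = (A * Ψ B).trace)
    {P : Matrix (Fin m × Fin n) (Fin m × Fin n) ℂ} (hP : IsEffect P) :
    IsEffect (1 - tensorMap Ψ m P) := by
  refine ⟨posSemidef_of_forall_dotProduct_mulVec_nonneg fun x => ?_, ?_⟩
  · set W := vecMulVec x (star x)
    have hW : W.PosSemidef := posSemidef_vecMulVec_self_star x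
    -- `Ψ ⊗ P ≤ 1` is the dual of `I ⊗ Φ` being trace-nonincreasing, given `P ≤ 1`.
    have hsplit : ((1 - tensorMap Ψ m P) * W).trace
        = (W.trace - (tensorMap Φ m W).trace) + (tensorMap Φ m W * (1 - P)).trace := by
      rw [Matrix.sub_mul, trace_sub, trace_mul_comm (tensorMap Ψ m P),
        ← trace_tensorMap_mul_of_adjoint hadj, Matrix.mul_sub, trace_sub, one_mul, mul_one]
      ring
    rw [dotProduct_mulVec_eq_trace_mul_vecMulVec, hsplit]
    exact add_nonneg (sub_nonneg.mpr (htni.trace_tensorMap_le hcp hW))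
      ((hcp m W hW).trace_mul_nonneg hP.2)
  · rw [sub_sub_cancel]
    exact hcp.posSemidef_tensorMap_of_adjoint hadj hP.1

end TensorMap

theorem partial_refinement_iff_cp_general {n : ℕ}
    (E F E' F' : Matrix (Fin n) (Fin n) ℂ → Matrix (Fin n) (Fin n) ℂ)
    (hE : IsCPTN E)
    (hadjE : ∀ A B : Matrix (Fin n) (Fin n) ℂ, (E A * B).trace = (A * E' B).trace)
    (hadjF : ∀ A B : Matrix (Fin n) (Fin n) ℂ, (F A * B).trace = (A * F' B).trace) :
    (∀ (m : ℕ) (M N : Matrix (Fin m × Fin n) (Fin m × Fin n) ℂ),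
        IsEffect M → IsEffect N →
        Loewner M (1 - tensorMap E' m (1 - N)) →
        Loewner M (1 - tensorMap F' m (1 - N))) ↔
      IsCP (E - F) := by
  constructor
  · intro hrefine m A hA
    refine posSemidef_of_forall_isEffect_trace_mul_nonneg fun P hP => ?_
    have hM := isEffect_one_sub_tensorMap_of_adjoint hE.2.1 hE.2.2 hadjE hP
    have hN : IsEffect (1 - P) := ⟨hP.2, by rw [sub_sub_cancel]; exact hP.1⟩
    have hwlp := hrefine m _ _ hM hN (by rw [Loewner, sub_sub_cancel, sub_self]; exact .zero)
    rw [Loewner, sub_sub_cancel, sub_sub_sub_cancel_left] at hwlp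
    rw [tensorMap_sub, Matrix.sub_mul, trace_sub, trace_tensorMap_mul_of_adjoint hadjE,
      trace_tensorMap_mul_of_adjoint hadjF, ← trace_sub, ← Matrix.mul_sub]
    exact hA.trace_mul_nonneg hwlp
  · intro hcp m M N _ hN hM
    have hadj : ∀ A B, ((E - F) A * B).trace = (A * (E' - F') B).trace := fun A B => by
      simp only [Pi.sub_apply, Matrix.sub_mul, Matrix.mul_sub, trace_sub, hadjE, hadjF]
    have hdiff := hcp.posSemidef_tensorMap_of_adjoint hadj hN.2
    rw [tensorMap_sub] at hdiff
    open scoped MatrixOrder in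
    exact le_iff.mp <| (le_iff.mpr hM).trans <| sub_le_sub_left (le_iff.mpr hdiff) 1

theorem partial_refinement_iff_cp {n : ℕ}
    (E F E' F' : Matrix (Fin n) (Fin n) ℂ → Matrix (Fin n) (Fin n) ℂ)
    (hE : IsCPTN E) (hF : IsCPTN F)
    (hE'l : IsLinearMap ℂ E') (hF'l : IsLinearMap ℂ F')
    (hadjE : ∀ A B : Matrix (Fin n) (Fin n) ℂ, (E A * B).trace = (A * E' B).trace)
    (hadjF : ∀ A B : Matrix (Fin n) (Fin n) ℂ, (F A * B).trace = (A * F' B).trace) :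
    (∀ (m : ℕ) (M N : Matrix (Fin m × Fin n) (Fin m × Fin n) ℂ),
        IsEffect M → IsEffect N →
        Loewner M (1 - tensorMap E' m (1 - N)) →
        Loewner M (1 - tensorMap F' m (1 - N))) ↔
      IsCP (E - F) :=
  partial_refinement_iff_cp_general E F E' F' hE hadjE hadjF
end
end

section
/- Let E be a CPTN super-operator on L(H). The maps wlp(Q) = ker(E†(Q⊥)) and sp(P) = supp(E(P)) on projectors form a Galois connection: for all projectors P, Q, P ⊑ wlp(Q) if and only if sp(P) ⊑ Q. Consequently sp(wlp(Q)) ⊑ Q and P ⊑ wlp(sp(P)). -/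
open Matrix
open scoped ComplexOrder

noncomputable section

/-!
Write `N = E†(Q⊥)`. Both sides of the Galois connection say that a product of two positive
operators vanishes: `P ⊑ ker N` means `N P = 0`, and `sp(P) ⊑ Q` means `Q⊥ E(P) = 0`.
For positive `A, B` one has `A B = 0` iff `tr(A B) = 0`, and the two traces agree by duality:
`tr(P N) = tr(E(P) Q⊥)`. The unit and counit inequalities are the two directions of the
connection applied to `P = wlp(Q)` and `Q = sp(P)`.
-/

open scoped MatrixOrder

namespace Matrix

variable {m 𝕜 : Type*} [Fintype m] [RCLike 𝕜]

lemma IsHermitian.mul_eq_zero_comm {A B : Matrix m m 𝕜} (hA : A.IsHermitian)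
    (hB : B.IsHermitian) : A * B = 0 ↔ B * A = 0 := by
  rw [← conjTranspose_inj, conjTranspose_mul, hA.eq, hB.eq, conjTranspose_zero]

lemma PosSemidef.trace_mul_nonneg_s15 [DecidableEq m] {A B : Matrix m m 𝕜} (hA : A.PosSemidef)
    (hB : B.PosSemidef) : 0 ≤ (A * B).trace := by
  obtain ⟨X, rfl⟩ := CStarAlgebra.nonneg_iff_eq_star_mul_self.mp hA.nonneg
  rw [mul_assoc, trace_mul_comm]
  exact (hB.mul_mul_conjTranspose_same X).trace_nonneg

lemma PosSemidef.trace_mul_eq_zero_iff [DecidableEq m] {A B : Matrix m m 𝕜} (hA : A.PosSemidef)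
    (hB : B.PosSemidef) : (A * B).trace = 0 ↔ A * B = 0 := by
  refine ⟨fun h => ?_, fun h => by rw [h, trace_zero]⟩
  obtain ⟨X, rfl⟩ := CStarAlgebra.nonneg_iff_eq_star_mul_self.mp hA.nonneg
  obtain ⟨Y, rfl⟩ := CStarAlgebra.nonneg_iff_eq_star_mul_self.mp hB.nonneg
  -- `tr(XᴴX YᴴY) = tr((YXᴴ)ᴴ(YXᴴ))`, a sum of squared moduli
  have hYX : Y * Xᴴ = 0 := by
    rw [← trace_conjTranspose_mul_self_eq_zero_iff, ← h]
    simp only [conjTranspose_mul, conjTranspose_conjTranspose, star_eq_conjTranspose, mul_assoc]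
    rw [trace_mul_comm Xᴴ]
    simp only [mul_assoc]
  have hXY : X * Yᴴ = 0 := by simpa using congrArg (·ᴴ) hYX
  simp only [star_eq_conjTranspose, mul_assoc, ← mul_assoc X, hXY, zero_mul, mul_zero]

lemma posSemidef_of_forall_dotProduct_mulVec_nonneg_s15 [DecidableEq m] {M : Matrix m m ℂ}
    (h : ∀ x, 0 ≤ star x ⬝ᵥ (M *ᵥ x)) : M.PosSemidef := by
  rw [← isPositive_toEuclideanLin_iff, LinearMap.isPositive_iff_complex]
  intro v
  simp only [EuclideanSpace.inner_eq_star_dotProduct, toLpLin_apply]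
  rw [dotProduct_star, dotProduct_comm, (IsSelfAdjoint.of_nonneg (h v.ofLp)).star_eq]
  obtain ⟨r, hr, hz⟩ := RCLike.nonneg_iff_exists_ofReal.mp (h v.ofLp)
  simp [← hz, hr]

lemma star_dotProduct_mulVec_eq_trace (M : Matrix m m 𝕜) (x : m → 𝕜) :
    star x ⬝ᵥ (M *ᵥ x) = (vecMulVec x (star x) * M).trace := by
  rw [vecMulVec_mul, trace_vecMulVec, dotProduct_mulVec, dotProduct_comm]

variable {R : Type*} [CommRing R]

lemma mul_eq_zero_iff_of_isIdempotentElem {M P : Matrix m m R} (hP : IsIdempotentElem P) :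
    M * P = 0 ↔ ∀ v, P *ᵥ v = v → M *ᵥ v = 0 := by
  refine ⟨fun h v hv => by rw [← hv, mulVec_mulVec, h, zero_mulVec], fun h => ?_⟩
  refine ext_iff_mulVec.2 fun v => ?_
  rw [← mulVec_mulVec, zero_mulVec]
  exact h _ (by rw [mulVec_mulVec, hP.eq])

lemma mul_one_sub_eq_zero_of_isIdempotentElem [DecidableEq m] {M P : Matrix m m R}
    (hP : IsIdempotentElem P) (hker : ∀ v, P *ᵥ v = 0 → M *ᵥ v = 0) : M * (1 - P) = 0 := by
  refine ext_iff_mulVec.2 fun v => ?_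
  rw [← mulVec_mulVec, zero_mulVec]
  exact hker _ (by rw [mulVec_mulVec, mul_sub, mul_one, hP.eq, sub_self, zero_mulVec])

lemma one_sub_mul_eq_zero_iff [DecidableEq m] {Q X : Matrix m m R} :
    (1 - Q) * X = 0 ↔ Q * X = X := by
  rw [sub_mul, one_mul, sub_eq_zero, eq_comm]

end Matrix

section Projector

variable {d : Type*} [Fintype d] {P : Matrix d d ℂ}

lemma IsProj.posSemidef (hP : IsProj P) : P.PosSemidef := by
  simpa only [hP.1.eq, hP.2] using posSemidef_conjTranspose_mul_self P

lemma IsProj.one_sub [DecidableEq d] (hP : IsProj P) : IsProj (1 - P) :=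
  ⟨isHermitian_one.sub hP.1, IsIdempotentElem.one_sub hP.2⟩

end Projector

section CompletelyPositive

variable {n : ℕ} {E E' : Matrix (Fin n) (Fin n) ℂ → Matrix (Fin n) (Fin n) ℂ}

lemma IsCP.posSemidef_apply (hE : IsCP E) {A : Matrix (Fin n) (Fin n) ℂ} (hA : A.PosSemidef) :
    (E A).PosSemidef :=
  -- `I₁ ⊗ E` is `E` with its indices relabelled by `Fin 1 × Fin n`
  (hE 1 _ (hA.submatrix Prod.snd)).submatrix fun j => ((0 : Fin 1), j)

lemma IsCP.posSemidef_adjoint_apply (hE : IsCP E)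
    (hadj : ∀ A B : Matrix (Fin n) (Fin n) ℂ, (E A * B).trace = (A * E' B).trace)
    {N : Matrix (Fin n) (Fin n) ℂ} (hN : N.PosSemidef) : (E' N).PosSemidef :=
  posSemidef_of_forall_dotProduct_mulVec_nonneg_s15 fun x => by
    rw [star_dotProduct_mulVec_eq_trace, ← hadj]
    exact (hE.posSemidef_apply (posSemidef_vecMulVec_self_star x)).trace_mul_nonneg_s15 hN

lemma IsCP.adjoint_mul_eq_zero_iff (hE : IsCP E)
    (hadj : ∀ A B : Matrix (Fin n) (Fin n) ℂ, (E A * B).trace = (A * E' B).trace)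
    {N R : Matrix (Fin n) (Fin n) ℂ} (hN : N.PosSemidef) (hR : R.PosSemidef) :
    E' N * R = 0 ↔ N * E R = 0 := by
  have hE'N := hE.posSemidef_adjoint_apply hadj hN
  rw [hE'N.isHermitian.mul_eq_zero_comm hR.isHermitian, ← hR.trace_mul_eq_zero_iff hE'N, ← hadj,
    trace_mul_comm, hN.trace_mul_eq_zero_iff (hE.posSemidef_apply hR)]

end CompletelyPositive

theorem wlp_sp_galois_general {n : ℕ}
    (E E' : Matrix (Fin n) (Fin n) ℂ → Matrix (Fin n) (Fin n) ℂ)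
    (hE : IsCPTN E)
    (hadj : ∀ A B : Matrix (Fin n) (Fin n) ℂ, (E A * B).trace = (A * E' B).trace)
    (P Q : Matrix (Fin n) (Fin n) ℂ) (hP : IsProj P) (hQ : IsProj Q)
    -- `W` is the projector onto `wlp(Q) = ker(E†(Q⊥))`
    (W : Matrix (Fin n) (Fin n) ℂ) (hW : IsProj W)
    (hWc : ∀ v : Fin n → ℂ, W.mulVec v = v ↔ (E' (1 - Q)).mulVec v = 0)
    -- `S` is the projector onto `sp(P) = supp(E(P))`
    (S : Matrix (Fin n) (Fin n) ℂ) (hS : IsProj S)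
    (hSc : ∀ v : Fin n → ℂ, S.mulVec v = 0 ↔ (E P).mulVec v = 0) :
    -- Galois connection: `P ⊑ wlp(Q)` iff `sp(P) ⊑ Q`
    ((∀ v : Fin n → ℂ, P.mulVec v = v → (E' (1 - Q)).mulVec v = 0) ↔ Q * E P = E P) ∧
    -- `sp(wlp(Q)) ⊑ Q`
    (Q * E W = E W) ∧
    -- `P ⊑ wlp(sp(P))`
    (∀ v : Fin n → ℂ, P.mulVec v = v → (E' (1 - S)).mulVec v = 0) := by
  have hCP : IsCP E := hE.2.1
  have galois : ∀ {Q R : Matrix (Fin n) (Fin n) ℂ}, IsProj Q → IsProj R →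
      ((∀ v, R *ᵥ v = v → E' (1 - Q) *ᵥ v = 0) ↔ Q * E R = E R) := fun hQ hR => by
    rw [← mul_eq_zero_iff_of_isIdempotentElem hR.2,
      hCP.adjoint_mul_eq_zero_iff hadj hQ.one_sub.posSemidef hR.posSemidef, one_sub_mul_eq_zero_iff]
  have hEPS : E P * (1 - S) = 0 :=
    mul_one_sub_eq_zero_of_isIdempotentElem hS.2 fun v => (hSc v).1
  refine ⟨galois hQ hP, (galois hQ hW).1 fun v => (hWc v).1, (galois hS hP).2 ?_⟩
  have hEP : (E P).IsHermitian := (hCP.posSemidef_apply hP.posSemidef).isHermitian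
  rwa [← one_sub_mul_eq_zero_iff, ← hEP.mul_eq_zero_comm hS.one_sub.1]

theorem wlp_sp_galois {n : ℕ}
    (E E' : Matrix (Fin n) (Fin n) ℂ → Matrix (Fin n) (Fin n) ℂ)
    (hE : IsCPTN E) (hE'l : IsLinearMap ℂ E')
    (hadj : ∀ A B : Matrix (Fin n) (Fin n) ℂ, (E A * B).trace = (A * E' B).trace)
    (P Q : Matrix (Fin n) (Fin n) ℂ) (hP : IsProj P) (hQ : IsProj Q)
    -- `W` is the projector onto `wlp(Q) = ker(E†(Q⊥))`
    (W : Matrix (Fin n) (Fin n) ℂ) (hW : IsProj W)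
    (hWc : ∀ v : Fin n → ℂ, W.mulVec v = v ↔ (E' (1 - Q)).mulVec v = 0)
    -- `S` is the projector onto `sp(P) = supp(E(P))`
    (S : Matrix (Fin n) (Fin n) ℂ) (hS : IsProj S)
    (hSc : ∀ v : Fin n → ℂ, S.mulVec v = 0 ↔ (E P).mulVec v = 0) :
    -- Galois connection: `P ⊑ wlp(Q)` iff `sp(P) ⊑ Q`
    ((∀ v : Fin n → ℂ, P.mulVec v = v → (E' (1 - Q)).mulVec v = 0) ↔ Q * E P = E P) ∧
    -- `sp(wlp(Q)) ⊑ Q`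
    (Q * E W = E W) ∧
    -- `P ⊑ wlp(sp(P))`
    (∀ v : Fin n → ℂ, P.mulVec v = v → (E' (1 - S)).mulVec v = 0) :=
  wlp_sp_galois_general E E' hE hadj P Q hP hQ W hW hWc S hS hSc
end
end
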